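/- Let γ be a modular bridge from Ω_A to Ω_B. If ω ∈ M with D_M(ω) ≤ 1 and j ∈ J is chosen so that mkD_{Ω_A}(ω, ω_j) ≤ ι(γ), then dn_γ(ω, η_j) ≤ ρ(γ); the same holds with the roles of Ω_A and Ω_B exchanged. Consequently, the maximum of the following four quantities is at most ρ(γ): sup over a ∈ sa(A) with L_A(a) ≤ 1 of inf over b ∈ sa(B) with L_B(b) ≤ 1 of bn_γ(a,b); the symmetric quantity exchanging A and B; sup over ω ∈ M with D_M(ω) ≤ 1 of inf over η ∈ N with D_N(η) ≤ 1 of dn_γ(ω,η); and the symmetric quantity exchanging M and N. -/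

import Mathlib

open scoped ComplexOrder

noncomputable section

/-! ### Admissible functions -/

/-- A function `F : [0,∞)⁴ → [0,∞)` is admissible when it is nondecreasing in each argument
and dominates `x₁x₃ + x₂x₄`. -/
def Admissible (F : ℝ → ℝ → ℝ → ℝ → ℝ) : Prop :=
  (∀ x₁ x₂ x₃ x₄ y₁ y₂ y₃ y₄ : ℝ, 0 ≤ x₁ → 0 ≤ x₂ → 0 ≤ x₃ → 0 ≤ x₄ →
      x₁ ≤ y₁ → x₂ ≤ y₂ → x₃ ≤ y₃ → x₄ ≤ y₄ → F x₁ x₂ x₃ x₄ ≤ F y₁ y₂ y₃ y₄) ∧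
  (∀ x₁ x₂ x₃ x₄ : ℝ, 0 ≤ x₁ → 0 ≤ x₂ → 0 ≤ x₃ → 0 ≤ x₄ →
      x₁ * x₃ + x₂ * x₄ ≤ F x₁ x₂ x₃ x₄)

/-- An admissible triple `(F,G,H)`. -/
def AdmissibleTriple (F : ℝ → ℝ → ℝ → ℝ → ℝ) (G : ℝ → ℝ → ℝ → ℝ) (H : ℝ → ℝ → ℝ) : Prop :=
  Admissible F ∧
  (∀ x y z x' y' z' : ℝ, 0 ≤ x → 0 ≤ y → 0 ≤ z → x ≤ x' → y ≤ y' → z ≤ z' →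
      G x y z ≤ G x' y' z') ∧
  (∀ x y z : ℝ, 0 ≤ x → 0 ≤ y → 0 ≤ z → (x + y) * z ≤ G x y z) ∧
  (∀ x y x' y' : ℝ, 0 ≤ x → 0 ≤ y → x ≤ x' → y ≤ y' → H x y ≤ H x' y') ∧
  (∀ x y : ℝ, 0 ≤ x → 0 ≤ y → 2 * x * y ≤ H x y)

section ReIm

variable {A : Type*} [NormedRing A] [StarRing A] [NormedAlgebra ℂ A]

/-- The real part `(a + a*)/2` of an element of a complex `*`-algebra. -/
def reEl (a : A) : A := (2⁻¹ : ℂ) • (a + star a)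

/-- The imaginary part `(a - a*)/(2i)` of an element of a complex `*`-algebra. -/
def imEl (a : A) : A := ((2 * Complex.I)⁻¹ : ℂ) • (a - star a)

end ReIm

/-! ### States -/

/-- A state on a unital complex `*`-algebra: a linear functional which is unital
and positive. -/
structure CState (A : Type*) [NormedRing A] [StarRing A] [NormedAlgebra ℂ A] where
  toFun : A →ₗ[ℂ] ℂ
  map_one : toFun 1 = 1
  positive : ∀ a : A, 0 ≤ toFun (star a * a)

/-- The topology induced by a distance function, generated by its open balls. -/
def ballTopology {X : Type*} (d : X → X → ℝ) : TopologicalSpace X :=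
  TopologicalSpace.generateFrom {s | ∃ (x : X) (ε : ℝ), 0 < ε ∧ s = {y | d x y < ε}}

/-- The Hausdorff distance between two sets, relative to a distance function. -/
def hausDist {X : Type*} (d : X → X → ℝ) (S T : Set X) : ℝ :=
  max (sSup {r | ∃ x ∈ S, r = sInf {s | ∃ y ∈ T, s = d x y}})
      (sSup {r | ∃ y ∈ T, r = sInf {s | ∃ x ∈ S, s = d x y}})

/-- The diameter of a set relative to a distance function. -/
def setDiam {X : Type*} (d : X → X → ℝ) (S : Set X) : ℝ :=
  sSup {r | ∃ x ∈ S, ∃ y ∈ S, r = d x y}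

/-- The weak-* topology on the state space. -/
def stateWeakTopology (A : Type*) [NormedRing A] [StarRing A] [NormedAlgebra ℂ A] :
    TopologicalSpace (CState A) :=
  TopologicalSpace.induced (fun (φ : CState A) (a : A) => φ.toFun a) Pi.topologicalSpace

/-- The Monge-Kantorovich metric associated with a Lipschitz seminorm `L` with domain `dom`. -/
def mkDist {A : Type*} [NormedRing A] [StarRing A] [NormedAlgebra ℂ A]
    (dom : Set A) (L : A → ℝ) (φ ψ : CState A) : ℝ :=
  sSup {r | ∃ a ∈ dom, L a ≤ 1 ∧ r = ‖φ.toFun a - ψ.toFun a‖}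

/-- The 1-level set of a pivot is nonempty. -/
def pivotLevelNonempty {D : Type*} [NormedRing D] [StarRing D] [NormedAlgebra ℂ D]
    (x : D) : Prop :=
  ∃ φ : CState D,
    φ.toFun (star (1 - x) * (1 - x)) = 0 ∧ φ.toFun ((1 - x) * star (1 - x)) = 0

/-! ### Quasi-Leibniz quantum compact metric spaces -/

/-- An `F`-quasi-Leibniz quantum compact metric space structure on a unital C*-algebra `A`:
a Lipschitz seminorm `L` defined on a dense Jordan-Lie subalgebra `dom` of the self-adjoint
part of `A`, vanishing exactly on `ℝ1`, lower semicontinuous, whose Monge-Kantorovich metric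
metrizes the weak-* topology on the state space, and satisfying the `F`-quasi-Leibniz
inequality. -/
structure QLSpace (A : Type*) [NormedRing A] [StarRing A] [CStarRing A]
    [NormedAlgebra ℂ A] [StarModule ℂ A] [CompleteSpace A]
    (F : ℝ → ℝ → ℝ → ℝ → ℝ) where
  dom : Set A
  L : A → ℝ
  dom_selfAdjoint : ∀ a ∈ dom, IsSelfAdjoint a
  dom_dense : closure dom = {a : A | IsSelfAdjoint a}
  dom_add : ∀ a ∈ dom, ∀ b ∈ dom, a + b ∈ dom
  dom_smul : ∀ (t : ℝ), ∀ a ∈ dom, (t : ℂ) • a ∈ dom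
  dom_jordan : ∀ a ∈ dom, ∀ b ∈ dom, (2⁻¹ : ℂ) • (a * b + b * a) ∈ dom
  dom_lie : ∀ a ∈ dom, ∀ b ∈ dom, ((2 * Complex.I)⁻¹ : ℂ) • (a * b - b * a) ∈ dom
  one_mem : (1 : A) ∈ dom
  L_nonneg : ∀ a : A, 0 ≤ L a
  L_add : ∀ a ∈ dom, ∀ b ∈ dom, L (a + b) ≤ L a + L b
  L_smul : ∀ (t : ℝ), ∀ a ∈ dom, L ((t : ℂ) • a) = |t| * L a
  L_eq_zero_iff : ∀ a ∈ dom, (L a = 0 ↔ ∃ t : ℝ, a = (t : ℂ) • (1 : A))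
  lowerSemicontinuous : IsClosed {a : A | a ∈ dom ∧ L a ≤ 1}
  leibniz_jordan : ∀ a ∈ dom, ∀ b ∈ dom,
      L ((2⁻¹ : ℂ) • (a * b + b * a)) ≤ F ‖a‖ ‖b‖ (L a) (L b)
  leibniz_lie : ∀ a ∈ dom, ∀ b ∈ dom,
      L (((2 * Complex.I)⁻¹ : ℂ) • (a * b - b * a)) ≤ F ‖a‖ ‖b‖ (L a) (L b)
  mk_metrizes : ballTopology (mkDist dom L) = stateWeakTopology A
/-! ### Metrized quantum vector bundles -/

/-- An `(F,G,H)`-metrized quantum vector bundle: a left Hilbert module `M` over a unital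
C*-algebra `A` equipped with an `F`-quasi-Leibniz quantum compact metric space structure,
together with a D-norm `D` defined on a dense subspace `Ddom` of `M`, dominating the
C*-Hilbert norm, with compact unit ball, and satisfying the inner and modular quasi-Leibniz
inequalities with respect to `G` and `H`. -/
structure BundledMQVB (F : ℝ → ℝ → ℝ → ℝ → ℝ) (G : ℝ → ℝ → ℝ → ℝ) (H : ℝ → ℝ → ℝ) where
  A : Type
  [instRing : NormedRing A]
  [instStarRing : StarRing A]
  [instCStar : CStarRing A]
  [instAlg : NormedAlgebra ℂ A]
  [instStarMod : StarModule ℂ A]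
  [instComplete : CompleteSpace A]
  M : Type
  [instM : NormedAddCommGroup M]
  [instMC : Module ℂ M]
  [instMA : Module A M]
  [instTower : IsScalarTower ℂ A M]
  [instMComplete : CompleteSpace M]
  base : QLSpace A F
  inn : M → M → A
  Ddom : Set M
  D : M → ℝ
  inn_add_left : ∀ x y z : M, inn (x + y) z = inn x z + inn y z
  inn_smul_left : ∀ (a : A) (x y : M), inn (a • x) y = a * inn x y
  inn_smul_leftC : ∀ (c : ℂ) (x y : M), inn (c • x) y = c • inn x y
  inn_star : ∀ x y : M, star (inn x y) = inn y x
  inn_pos : ∀ x : M, ∃ b : A, inn x x = star b * b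
  inn_definite : ∀ x : M, inn x x = 0 → x = 0
  norm_eq : ∀ x : M, ‖x‖ = Real.sqrt ‖inn x x‖
  Ddom_dense : Dense Ddom
  Ddom_add : ∀ x ∈ Ddom, ∀ y ∈ Ddom, x + y ∈ Ddom
  Ddom_smul : ∀ (c : ℂ), ∀ x ∈ Ddom, c • x ∈ Ddom
  D_nonneg : ∀ x : M, 0 ≤ D x
  D_add : ∀ x ∈ Ddom, ∀ y ∈ Ddom, D (x + y) ≤ D x + D y
  D_smul : ∀ (c : ℂ), ∀ x ∈ Ddom, D (c • x) = ‖c‖ * D x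
  norm_le_D : ∀ x ∈ Ddom, ‖x‖ ≤ D x
  D_ball_compact : IsCompact {x : M | x ∈ Ddom ∧ D x ≤ 1}
  D_leibniz : ∀ a ∈ base.dom, ∀ x ∈ Ddom,
      a • x ∈ Ddom ∧ D (a • x) ≤ G ‖a‖ (base.L a) (D x)
  inn_leibniz : ∀ x ∈ Ddom, ∀ y ∈ Ddom,
      reEl (inn x y) ∈ base.dom ∧ imEl (inn x y) ∈ base.dom ∧
      base.L (reEl (inn x y)) ≤ H (D x) (D y) ∧
      base.L (imEl (inn x y)) ≤ H (D x) (D y)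

attribute [instance] BundledMQVB.instRing BundledMQVB.instStarRing BundledMQVB.instCStar
  BundledMQVB.instAlg BundledMQVB.instStarMod BundledMQVB.instComplete
  BundledMQVB.instM BundledMQVB.instMC BundledMQVB.instMA BundledMQVB.instTower
  BundledMQVB.instMComplete

variable {F : ℝ → ℝ → ℝ → ℝ → ℝ} {G : ℝ → ℝ → ℝ → ℝ} {H : ℝ → ℝ → ℝ}

/-- The closed ball of radius `r` for the D-norm of a metrized quantum vector bundle. -/
def BundledMQVB.Dball (Ω : BundledMQVB F G H) (r : ℝ) : Set Ω.M :=
  {ω | ω ∈ Ω.Ddom ∧ Ω.D ω ≤ r}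

/-- The modular Monge-Kantorovich metric of a metrized quantum vector bundle. -/
def BundledMQVB.mkD (Ω : BundledMQVB F G H) (x y : Ω.M) : ℝ :=
  sSup {r | ∃ ξ ∈ Ω.Ddom, Ω.D ξ ≤ 1 ∧ r = ‖Ω.inn x ξ - Ω.inn y ξ‖}

/-- The `A`-weak topology on the module of a metrized quantum vector bundle. -/
def BundledMQVB.aWeak (Ω : BundledMQVB F G H) : TopologicalSpace Ω.M :=
  TopologicalSpace.induced (fun (ω : Ω.M) (ξ : Ω.M) => Ω.inn ω ξ) Pi.topologicalSpace
/-! ### Modular bridges -/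

/-- A modular bridge between two metrized quantum vector bundles. -/
structure ModularBridge (ΩA ΩB : BundledMQVB F G H) where
  Dalg : Type
  [instDRing : NormedRing Dalg]
  [instDStarRing : StarRing Dalg]
  [instDCStar : CStarRing Dalg]
  [instDAlg : NormedAlgebra ℂ Dalg]
  [instDStarMod : StarModule ℂ Dalg]
  [instDComplete : CompleteSpace Dalg]
  J : Type
  [instJ : Nonempty J]
  pivot : Dalg
  piA : ΩA.A →⋆ₐ[ℂ] Dalg
  piB : ΩB.A →⋆ₐ[ℂ] Dalg
  piA_inj : Function.Injective piA
  piB_inj : Function.Injective piB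
  pivot_norm : ‖pivot‖ = 1
  levelSet_nonempty : pivotLevelNonempty pivot
  anchors : J → ΩA.M
  coanchors : J → ΩB.M
  anchors_mem : ∀ j, anchors j ∈ ΩA.Ddom
  anchors_le : ∀ j, ΩA.D (anchors j) ≤ 1
  coanchors_mem : ∀ j, coanchors j ∈ ΩB.Ddom
  coanchors_le : ∀ j, ΩB.D (coanchors j) ≤ 1

attribute [instance] ModularBridge.instDRing ModularBridge.instDStarRing
  ModularBridge.instDCStar ModularBridge.instDAlg ModularBridge.instDStarMod
  ModularBridge.instDComplete ModularBridge.instJ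

namespace ModularBridge

variable {ΩA ΩB : BundledMQVB F G H}

/-- The bridge seminorm of a modular bridge. -/
def bn (γ : ModularBridge ΩA ΩB) (a : ΩA.A) (b : ΩB.A) : ℝ :=
  ‖γ.piA a * γ.pivot - γ.pivot * γ.piB b‖

/-- The deck seminorm of a modular bridge. -/
def dn (γ : ModularBridge ΩA ΩB) (ω : ΩA.M) (η : ΩB.M) : ℝ :=
  ⨆ k : γ.J,
    max (γ.bn (ΩA.inn ω (γ.anchors k)) (ΩB.inn η (γ.coanchors k)))
        (γ.bn (ΩA.inn (γ.anchors k) ω) (ΩB.inn (γ.coanchors k) η))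

/-- The basic reach of a modular bridge. -/
def basicReach (γ : ModularBridge ΩA ΩB) : ℝ :=
  max
    (sSup {r | ∃ a ∈ ΩA.base.dom, ΩA.base.L a ≤ 1 ∧
        r = sInf {s | ∃ b ∈ ΩB.base.dom, ΩB.base.L b ≤ 1 ∧ s = γ.bn a b}})
    (sSup {r | ∃ b ∈ ΩB.base.dom, ΩB.base.L b ≤ 1 ∧
        r = sInf {s | ∃ a ∈ ΩA.base.dom, ΩA.base.L a ≤ 1 ∧ s = γ.bn a b}})

/-- The modular reach of a modular bridge. -/
def modularReach (γ : ModularBridge ΩA ΩB) : ℝ :=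
  ⨆ j : γ.J, γ.dn (γ.anchors j) (γ.coanchors j)

/-- The imprint of a modular bridge. -/
def imprint (γ : ModularBridge ΩA ΩB) : ℝ :=
  max (hausDist ΩA.mkD (Set.range γ.anchors) (ΩA.Dball 1))
      (hausDist ΩB.mkD (Set.range γ.coanchors) (ΩB.Dball 1))

/-- The reach of a modular bridge. -/
def reach (γ : ModularBridge ΩA ΩB) : ℝ :=
  max γ.basicReach (γ.modularReach + γ.imprint)

/-- The states of the bridge algebra in the 1-level set of the pivot. -/
def levelStates (γ : ModularBridge ΩA ΩB) : Set (CState γ.Dalg) :=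
  {φ | φ.toFun (star (1 - γ.pivot) * (1 - γ.pivot)) = 0 ∧
       φ.toFun ((1 - γ.pivot) * star (1 - γ.pivot)) = 0}

/-- The height of a modular bridge. -/
def height (γ : ModularBridge ΩA ΩB) : ℝ :=
  max
    (hausDist (mkDist ΩA.base.dom ΩA.base.L) (Set.univ : Set (CState ΩA.A))
      {ψ | ∃ φ ∈ γ.levelStates, ∀ a : ΩA.A, ψ.toFun a = φ.toFun (γ.piA a)})
    (hausDist (mkDist ΩB.base.dom ΩB.base.L) (Set.univ : Set (CState ΩB.A))
      {ψ | ∃ φ ∈ γ.levelStates, ∀ b : ΩB.A, ψ.toFun b = φ.toFun (γ.piB b)})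

/-- The length of a modular bridge. -/
def length (γ : ModularBridge ΩA ΩB) : ℝ := max γ.reach γ.height

/-- The `l`-modular target set of `ω` for a modular bridge. -/
def mtarget (γ : ModularBridge ΩA ΩB) (ω : ΩA.M) (l : ℝ) : Set ΩB.M :=
  {η | η ∈ ΩB.Ddom ∧ ΩB.D η ≤ l ∧ γ.dn ω η ≤ l * γ.reach}

/-- The `l`-target set of `a` for a modular bridge. -/
def atarget (γ : ModularBridge ΩA ΩB) (a : ΩA.A) (l : ℝ) : Set ΩB.A :=
  {b | b ∈ ΩB.base.dom ∧ ΩB.base.L b ≤ l ∧ γ.bn a b ≤ l * γ.basicReach}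

/-- The reverse of a modular bridge. -/
def reverse (γ : ModularBridge ΩA ΩB) : ModularBridge ΩB ΩA where
  Dalg := γ.Dalg
  J := γ.J
  pivot := star γ.pivot
  piA := γ.piB
  piB := γ.piA
  piA_inj := γ.piB_inj
  piB_inj := γ.piA_inj
  pivot_norm := by rw [norm_star]; exact γ.pivot_norm
  levelSet_nonempty := by
    obtain ⟨φ, h1, h2⟩ := γ.levelSet_nonempty
    refine ⟨φ, ?_, ?_⟩
    · have e1 : star ((1 : γ.Dalg) - star γ.pivot) = 1 - γ.pivot := by
        simp [star_sub]
      have e2 : (1 : γ.Dalg) - star γ.pivot = star (1 - γ.pivot) := by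
        simp [star_sub]
      rw [e1, e2]; exact h2
    · have e1 : star ((1 : γ.Dalg) - star γ.pivot) = 1 - γ.pivot := by
        simp [star_sub]
      have e2 : (1 : γ.Dalg) - star γ.pivot = star (1 - γ.pivot) := by
        simp [star_sub]
      rw [e1, e2]; exact h1
  anchors := γ.coanchors
  coanchors := γ.anchors
  anchors_mem := γ.coanchors_mem
  anchors_le := γ.coanchors_le
  coanchors_mem := γ.anchors_mem
  coanchors_le := γ.anchors_le

end ModularBridge

/-! ### Modular treks -/

/-- A modular trek: a finite chain of composable modular bridges. -/
inductive Trek (F : ℝ → ℝ → ℝ → ℝ → ℝ) (G : ℝ → ℝ → ℝ → ℝ) (H : ℝ → ℝ → ℝ) :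
    BundledMQVB F G H → BundledMQVB F G H → Type 1
  | single {ΩA ΩB : BundledMQVB F G H} (γ : ModularBridge ΩA ΩB) : Trek F G H ΩA ΩB
  | cons {ΩA ΩB ΩC : BundledMQVB F G H} (γ : ModularBridge ΩA ΩB)
      (Γ : Trek F G H ΩB ΩC) : Trek F G H ΩA ΩC

namespace Trek

/-- The length of a modular trek: the sum of the lengths of its bridges. -/
def length : ∀ {ΩA ΩB : BundledMQVB F G H}, Trek F G H ΩA ΩB → ℝ
  | _, _, .single γ => γ.length
  | _, _, .cons γ Γ => γ.length + Trek.length Γ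

/-- The modular target set of a modular trek (the set of endpoints of `l`-itineraries). -/
def mtarget : ∀ {ΩA ΩB : BundledMQVB F G H}, Trek F G H ΩA ΩB → ΩA.M → ℝ → Set ΩB.M
  | _, _, .single γ, ω, l => γ.mtarget ω l
  | _, _, .cons γ Γ, ω, l => {η | ∃ ξ ∈ γ.mtarget ω l, η ∈ Trek.mtarget Γ ξ l}

/-- The target set of a modular trek on the base algebras. -/
def atarget : ∀ {ΩA ΩB : BundledMQVB F G H}, Trek F G H ΩA ΩB → ΩA.A → ℝ → Set ΩB.A
  | _, _, .single γ, a, l => γ.atarget a l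
  | _, _, .cons γ Γ, a, l => {b | ∃ c ∈ γ.atarget a l, b ∈ Trek.atarget Γ c l}

end Trek

/-!
Replacing `ω` by `ω'` moves each term `bn(⟨ω, ω_k⟩, ⟨η, η_k⟩)`, `bn(⟨ω_k, ω⟩, ⟨η_k, η⟩)` of the
deck seminorm by at most `mkD(ω, ω')`: the bridge seminorm is 1-Lipschitz in each argument and the
anchors `ω_k` are admissible test vectors for `mkD`. With `ω' = ω_j` this gives
`dn(ω, η_j) ≤ ρ_mod(γ) + mkD(ω, ω_j)`, and choosing `j` through the imprint bounds the sup-inf over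
the unit balls of the D-norms by `ρ_mod(γ) + ι(γ)`. The statements on the other side are those of
the reversed bridge, and the two sup-inf quantities on the base algebras make up `ρ_♭(γ)`.
-/

-- Needed for `NonUnitalStarAlgHom.norm_apply_le`: the maps `π_A`, `π_B` are contractive.
instance (priority := 10) instCStarOfBundled {F : ℝ → ℝ → ℝ → ℝ → ℝ} {G : ℝ → ℝ → ℝ → ℝ}
    {H : ℝ → ℝ → ℝ} (Ω : BundledMQVB F G H) : CStarAlgebra Ω.A := { }

instance (priority := 10) instCStarOfBridge {F : ℝ → ℝ → ℝ → ℝ → ℝ} {G : ℝ → ℝ → ℝ → ℝ}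
    {H : ℝ → ℝ → ℝ} {ΩA ΩB : BundledMQVB F G H} (γ : ModularBridge ΩA ΩB) :
    CStarAlgebra γ.Dalg := { }

lemma hausDist_nonneg {X : Type*} {d : X → X → ℝ} (hd : ∀ x y, 0 ≤ d x y) (S T : Set X) :
    0 ≤ hausDist d S T :=
  le_max_of_le_left <| Real.sSup_nonneg <| by
    rintro _ ⟨x, -, rfl⟩
    exact Real.sInf_nonneg (by rintro _ ⟨y, -, rfl⟩; exact hd _ _)

lemma sInf_le_hausDist {X : Type*} {d : X → X → ℝ} {S T : Set X} (hd : ∀ x y, 0 ≤ d x y)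
    {x₀ : X} (hx₀ : x₀ ∈ S) {C : ℝ} (hC : ∀ y ∈ T, d x₀ y ≤ C) {y : X} (hy : y ∈ T) :
    sInf {s | ∃ x ∈ S, s = d x y} ≤ hausDist d S T := by
  have hinf : ∀ y, sInf {s | ∃ x ∈ S, s = d x y} ≤ d x₀ y := fun y =>
    csInf_le ⟨0, by rintro _ ⟨x, -, rfl⟩; exact hd _ _⟩ ⟨x₀, hx₀, rfl⟩
  refine le_max_of_le_right (le_csSup ⟨C, ?_⟩ ⟨y, hy, rfl⟩)
  rintro _ ⟨y, hy, rfl⟩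
  exact (hinf y).trans (hC y hy)

namespace BundledMQVB

variable {F : ℝ → ℝ → ℝ → ℝ → ℝ} {G : ℝ → ℝ → ℝ → ℝ} {H : ℝ → ℝ → ℝ}
variable (Ω : BundledMQVB F G H)

lemma inn_add_right (x y z : Ω.M) : Ω.inn x (y + z) = Ω.inn x y + Ω.inn x z := by
  rw [← Ω.inn_star, Ω.inn_add_left, star_add, Ω.inn_star, Ω.inn_star]

lemma inn_smul_rightC (c : ℂ) (x y : Ω.M) :
    Ω.inn x (c • y) = (starRingEnd ℂ c) • Ω.inn x y := by
  rw [← Ω.inn_star, Ω.inn_smul_leftC, star_smul, Ω.inn_star]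
  rfl

lemma inn_sub_left (x y z : Ω.M) : Ω.inn (x - y) z = Ω.inn x z - Ω.inn y z := by
  have : x - y = x + (-1 : ℂ) • y := by module
  rw [this, Ω.inn_add_left, Ω.inn_smul_leftC]
  module

lemma inn_sub_right (x y z : Ω.M) : Ω.inn x (y - z) = Ω.inn x y - Ω.inn x z := by
  rw [← Ω.inn_star, inn_sub_left, star_sub, Ω.inn_star, Ω.inn_star]

lemma norm_inn_self (x : Ω.M) : ‖Ω.inn x x‖ = ‖x‖ ^ 2 := by
  rw [Ω.norm_eq, Real.sq_sqrt (norm_nonneg _)]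

lemma norm_smulC (c : ℂ) (x : Ω.M) : ‖c • x‖ = ‖c‖ * ‖x‖ := by
  have h : Ω.inn (c • x) (c • x) = ((‖c‖ ^ 2 : ℝ) : ℂ) • Ω.inn x x := by
    rw [Ω.inn_smul_leftC, inn_smul_rightC, smul_smul, Complex.mul_conj']
    norm_cast
  rw [Ω.norm_eq, h, norm_smul, Ω.norm_eq x, Complex.norm_real, Real.norm_eq_abs,
    abs_of_nonneg (by positivity), Real.sqrt_mul (by positivity), Real.sqrt_sq (norm_nonneg c)]

lemma polarization (x y : Ω.M) :
    (4 : ℂ) • Ω.inn x y =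
      Ω.inn (x + y) (x + y) - Ω.inn (x - y) (x - y)
        + Complex.I • Ω.inn (x + Complex.I • y) (x + Complex.I • y)
        - Complex.I • Ω.inn (x - Complex.I • y) (x - Complex.I • y) := by
  simp only [Ω.inn_add_left, inn_add_right, inn_sub_left, inn_sub_right,
    Ω.inn_smul_leftC, inn_smul_rightC, Complex.conj_I, smul_sub, smul_add, smul_smul]
  match_scalars <;> simp; ring

-- A crude substitute for Cauchy-Schwarz: all that matters is boundedness on unit balls, without
-- which the `sSup`s below would take the junk value `0`.
lemma norm_inn_le (x y : Ω.M) : ‖Ω.inn x y‖ ≤ (‖x‖ + ‖y‖) ^ 2 := by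
  have hsq : ∀ z : Ω.M, ‖z‖ ≤ ‖x‖ + ‖y‖ → ‖Ω.inn z z‖ ≤ (‖x‖ + ‖y‖) ^ 2 := fun z hz => by
    rw [norm_inn_self]
    gcongr
  have hIy : ‖Complex.I • y‖ = ‖y‖ := by simp [norm_smulC]
  have h₁ := hsq (x + y) (norm_add_le _ _)
  have h₂ := hsq (x - y) (norm_sub_le _ _)
  have h₃ := hsq (x + Complex.I • y) ((norm_add_le _ _).trans_eq (by rw [hIy]))
  have h₄ := hsq (x - Complex.I • y) ((norm_sub_le _ _).trans_eq (by rw [hIy]))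
  have h4 : ‖(4 : ℂ) • Ω.inn x y‖ = 4 * ‖Ω.inn x y‖ := by
    rw [norm_smul]
    norm_num
  have : 4 * ‖Ω.inn x y‖ ≤ 4 * (‖x‖ + ‖y‖) ^ 2 := by
    rw [← h4, polarization]
    refine (norm_sub_le _ _).trans ?_
    refine (add_le_add_left (norm_add_le _ _) _).trans ?_
    refine (add_le_add_left (add_le_add_left (norm_sub_le _ _) _) _).trans ?_
    simp only [norm_smul, Complex.norm_I, one_mul]
    linarith
  linarith

lemma norm_le_one {x : Ω.M} (hx : x ∈ Ω.Ddom) (hD : Ω.D x ≤ 1) : ‖x‖ ≤ 1 :=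
  (Ω.norm_le_D x hx).trans hD

lemma norm_inn_le_of_norm_right_le_one {x y : Ω.M} (hy : ‖y‖ ≤ 1) :
    ‖Ω.inn x y‖ ≤ (‖x‖ + 1) ^ 2 :=
  (Ω.norm_inn_le x y).trans (by gcongr)

lemma norm_inn_le_of_norm_left_le_one {x y : Ω.M} (hx : ‖x‖ ≤ 1) :
    ‖Ω.inn x y‖ ≤ (‖y‖ + 1) ^ 2 :=
  (Ω.norm_inn_le x y).trans (by rw [add_comm ‖x‖]; gcongr)

lemma norm_inn_sub_le {x y ξ : Ω.M} (hξ : ‖ξ‖ ≤ 1) :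
    ‖Ω.inn x ξ - Ω.inn y ξ‖ ≤ (‖x‖ + 1) ^ 2 + (‖y‖ + 1) ^ 2 :=
  (norm_sub_le _ _).trans (add_le_add (Ω.norm_inn_le_of_norm_right_le_one hξ)
    (Ω.norm_inn_le_of_norm_right_le_one hξ))

lemma mkD_nonneg (x y : Ω.M) : 0 ≤ Ω.mkD x y :=
  Real.sSup_nonneg (by rintro _ ⟨ξ, -, -, rfl⟩; exact norm_nonneg _)

lemma mkD_symm (x y : Ω.M) : Ω.mkD x y = Ω.mkD y x := by
  simp only [mkD, norm_sub_rev (Ω.inn x _)]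

lemma mkD_le (x y : Ω.M) : Ω.mkD x y ≤ (‖x‖ + 1) ^ 2 + (‖y‖ + 1) ^ 2 :=
  Real.sSup_le (by rintro _ ⟨ξ, hξ, hξD, rfl⟩; exact Ω.norm_inn_sub_le (Ω.norm_le_one hξ hξD))
    (by positivity)

lemma norm_inn_left_sub_le_mkD (x y : Ω.M) {ξ : Ω.M} (hξ : ξ ∈ Ω.Ddom) (hξD : Ω.D ξ ≤ 1) :
    ‖Ω.inn x ξ - Ω.inn y ξ‖ ≤ Ω.mkD x y := by
  refine le_csSup ⟨(‖x‖ + 1) ^ 2 + (‖y‖ + 1) ^ 2, ?_⟩ ⟨ξ, hξ, hξD, rfl⟩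
  rintro _ ⟨ζ, hζ, hζD, rfl⟩
  exact Ω.norm_inn_sub_le (Ω.norm_le_one hζ hζD)

lemma norm_inn_right_sub_le_mkD (x y : Ω.M) {ξ : Ω.M} (hξ : ξ ∈ Ω.Ddom) (hξD : Ω.D ξ ≤ 1) :
    ‖Ω.inn ξ x - Ω.inn ξ y‖ ≤ Ω.mkD x y := by
  rw [← norm_star, star_sub, Ω.inn_star, Ω.inn_star]
  exact Ω.norm_inn_left_sub_le_mkD x y hξ hξD

end BundledMQVB

namespace ModularBridge

variable {F : ℝ → ℝ → ℝ → ℝ → ℝ} {G : ℝ → ℝ → ℝ → ℝ} {H : ℝ → ℝ → ℝ}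
variable {ΩA ΩB : BundledMQVB F G H} (γ : ModularBridge ΩA ΩB)

lemma norm_anchors_le (k : γ.J) : ‖γ.anchors k‖ ≤ 1 :=
  ΩA.norm_le_one (γ.anchors_mem k) (γ.anchors_le k)

lemma norm_coanchors_le (k : γ.J) : ‖γ.coanchors k‖ ≤ 1 :=
  ΩB.norm_le_one (γ.coanchors_mem k) (γ.coanchors_le k)

lemma bn_nonneg (a : ΩA.A) (b : ΩB.A) : 0 ≤ γ.bn a b := norm_nonneg _

lemma bn_le_bn_add (a a' : ΩA.A) (b b' : ΩB.A) :
    γ.bn a b ≤ γ.bn a' b' + ‖a - a'‖ + ‖b - b'‖ := by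
  have hA : ‖γ.piA (a - a') * γ.pivot‖ ≤ ‖a - a'‖ :=
    (norm_mul_le _ _).trans <| by
      rw [γ.pivot_norm, mul_one]
      exact NonUnitalStarAlgHom.norm_apply_le _ _
  have hB : ‖γ.pivot * γ.piB (b - b')‖ ≤ ‖b - b'‖ :=
    (norm_mul_le _ _).trans <| by
      rw [γ.pivot_norm, one_mul]
      exact NonUnitalStarAlgHom.norm_apply_le _ _
  have hsplit : γ.piA a * γ.pivot - γ.pivot * γ.piB b =
      (γ.piA a' * γ.pivot - γ.pivot * γ.piB b') + γ.piA (a - a') * γ.pivot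
        - γ.pivot * γ.piB (b - b') := by
    rw [map_sub, map_sub, sub_mul, mul_sub]
    abel
  rw [bn, hsplit]
  exact (norm_sub_le _ _).trans (add_le_add ((norm_add_le _ _).trans (add_le_add le_rfl hA)) hB)

lemma bn_le (a : ΩA.A) (b : ΩB.A) : γ.bn a b ≤ ‖a‖ + ‖b‖ := by
  simpa [bn, add_assoc] using γ.bn_le_bn_add a 0 b 0

def deckTerm (ω : ΩA.M) (η : ΩB.M) (k : γ.J) : ℝ :=
  max (γ.bn (ΩA.inn ω (γ.anchors k)) (ΩB.inn η (γ.coanchors k)))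
      (γ.bn (ΩA.inn (γ.anchors k) ω) (ΩB.inn (γ.coanchors k) η))

lemma deckTerm_le (ω : ΩA.M) (η : ΩB.M) (k : γ.J) :
    γ.deckTerm ω η k ≤ (‖ω‖ + 1) ^ 2 + (‖η‖ + 1) ^ 2 := by
  have hak := γ.norm_anchors_le k
  have hck := γ.norm_coanchors_le k
  exact max_le
    ((γ.bn_le _ _).trans (add_le_add (ΩA.norm_inn_le_of_norm_right_le_one hak)
      (ΩB.norm_inn_le_of_norm_right_le_one hck)))
    ((γ.bn_le _ _).trans (add_le_add (ΩA.norm_inn_le_of_norm_left_le_one hak)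
      (ΩB.norm_inn_le_of_norm_left_le_one hck)))

lemma deckTerm_le_dn (ω : ΩA.M) (η : ΩB.M) (k : γ.J) : γ.deckTerm ω η k ≤ γ.dn ω η :=
  le_ciSup ⟨_, by rintro _ ⟨k, rfl⟩; exact γ.deckTerm_le ω η k⟩ k

lemma dn_le_of_forall_deckTerm_le {ω : ΩA.M} {η : ΩB.M} {c : ℝ}
    (h : ∀ k, γ.deckTerm ω η k ≤ c) : γ.dn ω η ≤ c :=
  ciSup_le h

lemma dn_nonneg (ω : ΩA.M) (η : ΩB.M) : 0 ≤ γ.dn ω η :=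
  Real.iSup_nonneg fun _ => (γ.bn_nonneg _ _).trans (le_max_left _ _)

lemma dn_le (ω : ΩA.M) (η : ΩB.M) : γ.dn ω η ≤ (‖ω‖ + 1) ^ 2 + (‖η‖ + 1) ^ 2 :=
  γ.dn_le_of_forall_deckTerm_le (γ.deckTerm_le ω η)

lemma dn_le_dn_add_mkD (ω ω' : ΩA.M) (η : ΩB.M) :
    γ.dn ω η ≤ γ.dn ω' η + ΩA.mkD ω ω' := by
  refine γ.dn_le_of_forall_deckTerm_le fun k => ?_
  have hterm := γ.deckTerm_le_dn ω' η k
  have h₁ := ΩA.norm_inn_left_sub_le_mkD ω ω' (γ.anchors_mem k) (γ.anchors_le k)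
  have h₂ := ΩA.norm_inn_right_sub_le_mkD ω ω' (γ.anchors_mem k) (γ.anchors_le k)
  have e₁ := γ.bn_le_bn_add (ΩA.inn ω (γ.anchors k)) (ΩA.inn ω' (γ.anchors k))
    (ΩB.inn η (γ.coanchors k)) (ΩB.inn η (γ.coanchors k))
  have e₂ := γ.bn_le_bn_add (ΩA.inn (γ.anchors k) ω) (ΩA.inn (γ.anchors k) ω')
    (ΩB.inn (γ.coanchors k) η) (ΩB.inn (γ.coanchors k) η)
  simp only [sub_self, norm_zero, add_zero] at e₁ e₂
  obtain ⟨t₁, t₂⟩ := max_le_iff.mp hterm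
  exact max_le (by linarith) (by linarith)

lemma dn_anchors_le_modularReach (j : γ.J) :
    γ.dn (γ.anchors j) (γ.coanchors j) ≤ γ.modularReach := by
  refine le_ciSup (f := fun j => γ.dn (γ.anchors j) (γ.coanchors j))
    ⟨(1 + 1) ^ 2 + (1 + 1) ^ 2, ?_⟩ j
  rintro _ ⟨k, rfl⟩
  exact (γ.dn_le _ _).trans <| by
    gcongr <;> [exact γ.norm_anchors_le k; exact γ.norm_coanchors_le k]

lemma modularReach_nonneg : 0 ≤ γ.modularReach :=
  Real.iSup_nonneg fun _ => γ.dn_nonneg _ _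

lemma imprint_nonneg : 0 ≤ γ.imprint :=
  le_max_of_le_left (hausDist_nonneg ΩA.mkD_nonneg _ _)

lemma dn_le_modularReach_add_mkD (ω : ΩA.M) (j : γ.J) :
    γ.dn ω (γ.coanchors j) ≤ γ.modularReach + ΩA.mkD ω (γ.anchors j) :=
  (γ.dn_le_dn_add_mkD ω (γ.anchors j) (γ.coanchors j)).trans
    (add_le_add_left (γ.dn_anchors_le_modularReach j) _)

lemma sInf_mkD_anchors_le_imprint {ω : ΩA.M} (hω : ω ∈ ΩA.Dball 1) :
    sInf {s | ∃ x ∈ Set.range γ.anchors, s = ΩA.mkD x ω} ≤ γ.imprint := by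
  obtain ⟨j₀⟩ := γ.instJ
  refine le_max_of_le_left (sInf_le_hausDist (S := Set.range γ.anchors) ΩA.mkD_nonneg ⟨j₀, rfl⟩
    (C := (‖γ.anchors j₀‖ + 1) ^ 2 + (1 + 1) ^ 2) (fun y hy => ?_) hω)
  exact (ΩA.mkD_le _ y).trans (by gcongr; exact ΩA.norm_le_one hy.1 hy.2)

lemma sInf_dn_le {ω : ΩA.M} (hω : ω ∈ ΩA.Dball 1) :
    sInf {s | ∃ η ∈ ΩB.Ddom, ΩB.D η ≤ 1 ∧ s = γ.dn ω η} ≤ γ.modularReach + γ.imprint := by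
  obtain ⟨j₀⟩ := γ.instJ
  have hj : ∀ j, sInf {s | ∃ η ∈ ΩB.Ddom, ΩB.D η ≤ 1 ∧ s = γ.dn ω η}
      ≤ γ.modularReach + ΩA.mkD (γ.anchors j) ω := fun j =>
    calc sInf {s | ∃ η ∈ ΩB.Ddom, ΩB.D η ≤ 1 ∧ s = γ.dn ω η} ≤ γ.dn ω (γ.coanchors j) :=
          csInf_le ⟨0, by rintro _ ⟨η, -, -, rfl⟩; exact γ.dn_nonneg _ _⟩
            ⟨γ.coanchors j, γ.coanchors_mem j, γ.coanchors_le j, rfl⟩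
      _ ≤ γ.modularReach + ΩA.mkD ω (γ.anchors j) := γ.dn_le_modularReach_add_mkD ω j
      _ = γ.modularReach + ΩA.mkD (γ.anchors j) ω := by rw [ΩA.mkD_symm]
  have hinf : sInf {s | ∃ η ∈ ΩB.Ddom, ΩB.D η ≤ 1 ∧ s = γ.dn ω η} - γ.modularReach
      ≤ sInf {s | ∃ x ∈ Set.range γ.anchors, s = ΩA.mkD x ω} :=
    le_csInf ⟨ΩA.mkD (γ.anchors j₀) ω, γ.anchors j₀, ⟨j₀, rfl⟩, rfl⟩ (by
      rintro _ ⟨_, ⟨j, rfl⟩, rfl⟩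
      linarith [hj j])
  linarith [γ.sInf_mkD_anchors_le_imprint hω]

lemma sSup_sInf_dn_le :
    sSup {r | ∃ ω ∈ ΩA.Ddom, ΩA.D ω ≤ 1 ∧
        r = sInf {s | ∃ η ∈ ΩB.Ddom, ΩB.D η ≤ 1 ∧ s = γ.dn ω η}}
      ≤ γ.modularReach + γ.imprint :=
  Real.sSup_le (by rintro _ ⟨ω, hω, hωD, rfl⟩; exact γ.sInf_dn_le ⟨hω, hωD⟩)
    (add_nonneg γ.modularReach_nonneg γ.imprint_nonneg)

lemma reverse_bn (a : ΩA.A) (b : ΩB.A) : γ.reverse.bn b a = γ.bn (star a) (star b) := by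
  change ‖γ.piB b * star γ.pivot - star γ.pivot * γ.piA a‖
    = ‖γ.piA (star a) * γ.pivot - γ.pivot * γ.piB (star b)‖
  rw [← norm_neg, ← norm_star (γ.piA (star a) * γ.pivot - _)]
  simp only [map_star, star_sub, star_mul, star_star, neg_sub]

lemma reverse_dn (ω : ΩA.M) (η : ΩB.M) : γ.reverse.dn η ω = γ.dn ω η := by
  simp only [dn, reverse_bn, ΩA.inn_star, ΩB.inn_star, max_comm]
  rfl

lemma reverse_modularReach : γ.reverse.modularReach = γ.modularReach := by
  simp only [modularReach, reverse_dn]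
  rfl

lemma reverse_imprint : γ.reverse.imprint = γ.imprint :=
  max_comm _ _

end ModularBridge

theorem statement5_general {F : ℝ → ℝ → ℝ → ℝ → ℝ} {G : ℝ → ℝ → ℝ → ℝ} {H : ℝ → ℝ → ℝ}
    {ΩA ΩB : BundledMQVB F G H} (γ : ModularBridge ΩA ΩB) :
    (∀ ω ∈ ΩA.Ddom, ΩA.D ω ≤ 1 → ∀ j : γ.J,
        ΩA.mkD ω (γ.anchors j) ≤ γ.imprint → γ.dn ω (γ.coanchors j) ≤ γ.reach) ∧
    (∀ η ∈ ΩB.Ddom, ΩB.D η ≤ 1 → ∀ j : γ.J,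
        ΩB.mkD η (γ.coanchors j) ≤ γ.imprint → γ.dn (γ.anchors j) η ≤ γ.reach) ∧
    max
      (max
        (sSup {r | ∃ a ∈ ΩA.base.dom, ΩA.base.L a ≤ 1 ∧
            r = sInf {s | ∃ b ∈ ΩB.base.dom, ΩB.base.L b ≤ 1 ∧ s = γ.bn a b}})
        (sSup {r | ∃ b ∈ ΩB.base.dom, ΩB.base.L b ≤ 1 ∧
            r = sInf {s | ∃ a ∈ ΩA.base.dom, ΩA.base.L a ≤ 1 ∧ s = γ.bn a b}}))
      (max
        (sSup {r | ∃ ω ∈ ΩA.Ddom, ΩA.D ω ≤ 1 ∧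
            r = sInf {s | ∃ η ∈ ΩB.Ddom, ΩB.D η ≤ 1 ∧ s = γ.dn ω η}})
        (sSup {r | ∃ η ∈ ΩB.Ddom, ΩB.D η ≤ 1 ∧
            r = sInf {s | ∃ ω ∈ ΩA.Ddom, ΩA.D ω ≤ 1 ∧ s = γ.dn ω η}}))
      ≤ γ.reach := by
  have hreach : γ.modularReach + γ.imprint ≤ γ.reach := le_max_right _ _
  have hB := γ.reverse.sSup_sInf_dn_le
  simp only [ModularBridge.reverse_dn, ModularBridge.reverse_modularReach,
    ModularBridge.reverse_imprint] at hB
  refine ⟨fun ω _ _ j hj => ?_, fun η _ _ j hj => ?_,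
    max_le (le_max_left γ.basicReach _) (max_le ?_ (hB.trans hreach))⟩
  · linarith [γ.dn_le_modularReach_add_mkD ω j]
  · have := γ.reverse.dn_le_modularReach_add_mkD η j
    rw [ModularBridge.reverse_dn, ModularBridge.reverse_modularReach] at this
    exact this.trans ((add_le_add le_rfl hj).trans hreach)
  · exact γ.sSup_sInf_dn_le.trans hreach

/-- if `ω` is in the closed unit ball of `D_M` and `j ∈ J` is such that
`mkD(ω, ω_j) ≤ ι(γ)`, then `dn(ω, η_j) ≤ ρ(γ)`, and symmetrically; consequently the four
natural sup-inf quantities between the unit balls of the L-seminorms and of the D-norms are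
all bounded by the reach `ρ(γ)`. -/
theorem statement5 {F : ℝ → ℝ → ℝ → ℝ → ℝ} {G : ℝ → ℝ → ℝ → ℝ} {H : ℝ → ℝ → ℝ}
    (hFGH : AdmissibleTriple F G H)
    {ΩA ΩB : BundledMQVB F G H} (γ : ModularBridge ΩA ΩB) :
    (∀ ω ∈ ΩA.Ddom, ΩA.D ω ≤ 1 → ∀ j : γ.J,
        ΩA.mkD ω (γ.anchors j) ≤ γ.imprint → γ.dn ω (γ.coanchors j) ≤ γ.reach) ∧
    (∀ η ∈ ΩB.Ddom, ΩB.D η ≤ 1 → ∀ j : γ.J,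
        ΩB.mkD η (γ.coanchors j) ≤ γ.imprint → γ.dn (γ.anchors j) η ≤ γ.reach) ∧
    max
      (max
        (sSup {r | ∃ a ∈ ΩA.base.dom, ΩA.base.L a ≤ 1 ∧
            r = sInf {s | ∃ b ∈ ΩB.base.dom, ΩB.base.L b ≤ 1 ∧ s = γ.bn a b}})
        (sSup {r | ∃ b ∈ ΩB.base.dom, ΩB.base.L b ≤ 1 ∧
            r = sInf {s | ∃ a ∈ ΩA.base.dom, ΩA.base.L a ≤ 1 ∧ s = γ.bn a b}}))
      (max
        (sSup {r | ∃ ω ∈ ΩA.Ddom, ΩA.D ω ≤ 1 ∧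
            r = sInf {s | ∃ η ∈ ΩB.Ddom, ΩB.D η ≤ 1 ∧ s = γ.dn ω η}})
        (sSup {r | ∃ η ∈ ΩB.Ddom, ΩB.D η ≤ 1 ∧
            r = sInf {s | ∃ ω ∈ ΩA.Ddom, ΩA.D ω ≤ 1 ∧ s = γ.dn ω η}}))
      ≤ γ.reach :=
  statement5_general γ
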